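/- Let u(k) = (1-p)^{k-1}·p for k ≥ 1 (geometric distribution, 0 < p < 1) and u(0) = 0. Then for n ≥ 2, w(n) = (μ₁/(n-1))·u₁^{*n}(n-2) = (1-p)^{n-2}·p^{2n-1}·Γ(3n-2)/(Γ(n)·Γ(2n)). -/

import Mathlib

open Real

/-- Convolution of sequences on ℕ. -/
def conv (f g : ℕ → ℝ) : ℕ → ℝ := fun m => ∑ i ∈ Finset.range (m + 1), f i * g (m - i)

/-- `n`-fold convolution power; `convPow f 0` is the convolution identity `δ_{k,0}`. -/
def convPow (f : ℕ → ℝ) : ℕ → ℕ → ℝ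
  | 0 => fun k => if k = 0 then 1 else 0
  | n + 1 => conv (convPow f n) f

/-- Hockey stick identity. -/
lemma hockey (a m : ℕ) : ∑ i ∈ Finset.range (m + 1), (a + i).choose i = (a + m + 1).choose m := by
  induction m with
  | zero => simp
  | succ m ih =>
      rw [Finset.sum_range_succ, ih]
      show (a + m + 1).choose m + (a + m + 1).choose (m + 1) = ((a + m + 1) + 1).choose (m + 1)
      exact (Nat.choose_succ_succ' (a + m + 1) m).symm

lemma key2 (a m : ℕ) :
    ∑ i ∈ Finset.range (m + 1), (a + i).choose i * (m - i + 1) = (a + m + 2).choose m := by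
  induction m with
  | zero => simp
  | succ m ih =>
      rw [Finset.sum_range_succ]
      have h1 : ∑ i ∈ Finset.range (m + 1), (a + i).choose i * (m + 1 - i + 1)
          = ∑ i ∈ Finset.range (m + 1), ((a + i).choose i * (m - i + 1) + (a + i).choose i) := by
        apply Finset.sum_congr rfl
        intro i hi
        have : i ≤ m := by simpa [Nat.lt_succ_iff] using hi
        have : m + 1 - i + 1 = (m - i + 1) + 1 := by omega
        rw [this, Nat.mul_add, Nat.mul_one]
      rw [h1, Finset.sum_add_distrib, ih, hockey]
      have hlast : m + 1 - (m + 1) + 1 = 1 := by omega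
      rw [hlast, Nat.mul_one]
      show (a + m + 2).choose m + (a + m + 1).choose m + (a + m + 1).choose (m + 1)
          = ((a + m + 2) + 1).choose (m + 1)
      rw [Nat.choose_succ_succ' (a + m + 2) m]
      show (a + m + 2).choose m + (a + m + 1).choose m + (a + m + 1).choose (m + 1)
          = (a + m + 2).choose m + ((a + m + 1) + 1).choose (m + 1)
      rw [Nat.choose_succ_succ' (a + m + 1) m]
      omega

/-- Convolution powers of the negative binomial kernel. -/
lemma convPow_negbin (x c : ℝ) (f : ℕ → ℝ) (hf : ∀ k, f k = ((k : ℝ) + 1) * x ^ k * c)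
    (s : ℕ) : ∀ m : ℕ, convPow f (s + 1) m
      = ((m + 2 * s + 1).choose m : ℝ) * x ^ m * c ^ (s + 1) := by
  induction s with
  | zero =>
      intro m
      have : convPow f 1 m = f m := by
        simp [convPow, conv, Finset.sum_ite_eq', Finset.mem_range]
      rw [this, hf]
      have : (m + 2 * 0 + 1).choose m = m + 1 := by
        simp [Nat.choose_succ_self_right]
      rw [this]
      push_cast
      ring
  | succ s ih =>
      intro m
      show conv (convPow f (s + 1)) f m = _
      unfold conv
      have hterm : ∀ i ∈ Finset.range (m + 1),
          convPow f (s + 1) i * f (m - i)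
            = (((2 * s + 1 + i).choose i * (m - i + 1) : ℕ) : ℝ) * (x ^ m * c ^ (s + 2)) := by
        intro i hi
        have him : i ≤ m := by simpa [Nat.lt_succ_iff] using hi
        rw [ih i, hf (m - i)]
        have hc1 : (i + 2 * s + 1) = (2 * s + 1 + i) := by omega
        rw [hc1]
        have hx : x ^ m = x ^ i * x ^ (m - i) := by
          rw [← pow_add]; congr 1; omega
        rw [hx]
        push_cast
        ring
      rw [Finset.sum_congr rfl hterm, ← Finset.sum_mul, ← Nat.cast_sum]
      rw [key2 (2 * s + 1) m]
      have : (2 * s + 1 + m + 2) = (m + 2 * (s + 1) + 1) := by omega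
      rw [this]
      ring

/-- Component size distribution for the geometric degree distribution
`u(k) = (1-p)^{k-1} p` for `k ≥ 1`, `u(0) = 0`. -/
theorem component_size_geometric (p : ℝ) (hp0 : 0 < p) (hp1 : p < 1)
    (u : ℕ → ℝ) (hu0 : u 0 = 0) (hu : ∀ k : ℕ, 1 ≤ k → u k = (1 - p) ^ (k - 1) * p)
    (μ₁ : ℝ) (hμ₁ : HasSum (fun k : ℕ => (k : ℝ) * u k) μ₁)
    (u₁ : ℕ → ℝ) (hu₁ : ∀ k, u₁ k = ((k : ℝ) + 1) * u (k + 1) / μ₁) :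
    ∀ n : ℕ, 2 ≤ n →
      μ₁ / ((n : ℝ) - 1) * convPow u₁ n (n - 2) =
        (1 - p) ^ (n - 2) * p ^ (2 * n - 1) *
          Gamma (3 * n - 2) / (Gamma n * Gamma (2 * n)) := by
  have hq0 : 0 < 1 - p := by linarith
  have hq1 : 1 - p < 1 := by linarith
  have hqne : (1 - p) ≠ 0 := ne_of_gt hq0
  have hpne : p ≠ 0 := ne_of_gt hp0
  -- μ₁ = 1/p
  have hgeom : HasSum (fun k : ℕ => (k : ℝ) * (1 - p) ^ k) ((1 - p) / (1 - (1 - p)) ^ 2) :=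
    hasSum_coe_mul_geometric_of_norm_lt_one (by rw [Real.norm_eq_abs, abs_of_pos hq0]; exact hq1)
  have hμval : μ₁ = 1 / p := by
    have h2 : HasSum (fun k : ℕ => (p / (1 - p)) * ((k : ℝ) * (1 - p) ^ k))
        ((p / (1 - p)) * ((1 - p) / (1 - (1 - p)) ^ 2)) := hgeom.mul_left _
    have heq : (fun k : ℕ => (k : ℝ) * u k)
        = fun k : ℕ => (p / (1 - p)) * ((k : ℝ) * (1 - p) ^ k) := by
      funext k
      cases k with
      | zero => simp [hu0]
      | succ j =>
          rw [hu (j + 1) (by omega)]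
          simp only [Nat.add_sub_cancel]
          rw [pow_succ]
          push_cast
          field_simp
    have hval : (p / (1 - p)) * ((1 - p) / (1 - (1 - p)) ^ 2) = 1 / p := by
      rw [sub_sub_cancel]
      field_simp
    have := (heq ▸ hμ₁).unique (hval ▸ h2)
    exact this
  -- u₁ formula
  have hu₁' : ∀ k, u₁ k = ((k : ℝ) + 1) * (1 - p) ^ k * p ^ 2 := by
    intro k
    rw [hu₁ k, hu (k + 1) (by omega), hμval]
    simp only [Nat.add_sub_cancel]
    field_simp
  intro n hn
  obtain ⟨t, rfl⟩ : ∃ t, n = t + 2 := ⟨n - 2, by omega⟩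
  have hconv : convPow u₁ (t + 2) t
      = ((t + 2 * (t + 1) + 1).choose t : ℝ) * (1 - p) ^ t * (p ^ 2) ^ (t + 2) :=
    convPow_negbin (1 - p) (p ^ 2) u₁ hu₁' (t + 1) t
  have hidx : t + 2 * (t + 1) + 1 = 3 * t + 3 := by omega
  rw [hidx] at hconv
  have hsub : t + 2 - 2 = t := by omega
  rw [hsub]
  rw [hconv, hμval]
  -- Gamma values
  have hg1 : Gamma (3 * ((t + 2 : ℕ) : ℝ) - 2) = (Nat.factorial (3 * t + 3) : ℝ) := by
    have : 3 * ((t + 2 : ℕ) : ℝ) - 2 = ((3 * t + 3 : ℕ) : ℝ) + 1 := by push_cast; ring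
    rw [this, Real.Gamma_nat_eq_factorial]
  have hg2 : Gamma ((t + 2 : ℕ) : ℝ) = (Nat.factorial (t + 1) : ℝ) := by
    have : ((t + 2 : ℕ) : ℝ) = ((t + 1 : ℕ) : ℝ) + 1 := by push_cast; ring
    rw [this, Real.Gamma_nat_eq_factorial]
  have hg3 : Gamma (2 * ((t + 2 : ℕ) : ℝ)) = (Nat.factorial (2 * t + 3) : ℝ) := by
    have : 2 * ((t + 2 : ℕ) : ℝ) = ((2 * t + 3 : ℕ) : ℝ) + 1 := by push_cast; ring
    rw [this, Real.Gamma_nat_eq_factorial]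
  rw [hg1, hg2, hg3]
  have hexp : 2 * (t + 2) - 1 = 2 * t + 3 := by omega
  rw [hexp]
  -- key factorial identity
  have hchoose : ((3 * t + 3).choose t * Nat.factorial t * Nat.factorial (2 * t + 3)
      = Nat.factorial (3 * t + 3)) := by
    have h := Nat.choose_mul_factorial_mul_factorial (n := 3 * t + 3) (k := t) (by omega)
    have : 3 * t + 3 - t = 2 * t + 3 := by omega
    rwa [this] at h
  have hfac : (Nat.factorial (3 * t + 3) : ℝ)
      = ((3 * t + 3).choose t : ℝ) * (Nat.factorial t : ℝ) * (Nat.factorial (2 * t + 3) : ℝ) := by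
    exact_mod_cast (hchoose).symm
  rw [hfac]
  have hft1 : (Nat.factorial (t + 1) : ℝ) = ((t : ℝ) + 1) * (Nat.factorial t : ℝ) := by
    rw [Nat.factorial_succ]; push_cast; ring
  rw [hft1]
  have hne2 : (Nat.factorial t : ℝ) ≠ 0 := by exact_mod_cast t.factorial_ne_zero
  have hne3 : (Nat.factorial (2 * t + 3) : ℝ) ≠ 0 := by exact_mod_cast (2 * t + 3).factorial_ne_zero
  have hcast : ((t + 2 : ℕ) : ℝ) - 1 = (t : ℝ) + 1 := by push_cast; ring
  rw [hcast]
  have hne1' : (t : ℝ) + 1 ≠ 0 := by positivity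
  field_simp
  ring
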